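/- Let C > 0 and 0 < α < 1 be constants such that Δ_ρ^S(n) ≤ C n^α and N_ρ^S(n) ≤ exp(C n^α) for all n (for the action of G on the G-orbit of ρ = 1^∞), and let r_n = 2^{⌊n/2⌋}. Then for every sufficiently large n, every ξ_n ∈ {ρ_n, η_n}, and every k ≤ r_n, the action of G_n on X_n with respect to S_n satisfies Δ_{ξ_n}^{S_n}(k) ≤ C k^α and N_{ξ_n}^{S_n}(k) ≤ exp(C k^α). -/

import Mathlib

noncomputable section

/-! ### The Grigorchuk generators -/

namespace Grig

def aFun : List Bool → List Bool
  | [] => []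
  | x :: w => (!x) :: w

mutual
  def bFun : List Bool → List Bool
    | [] => []
    | false :: w => false :: aFun w
    | true :: w => true :: cFun w
  def cFun : List Bool → List Bool
    | [] => []
    | false :: w => false :: aFun w
    | true :: w => true :: dFun w
  def dFun : List Bool → List Bool
    | [] => []
    | false :: w => false :: w
    | true :: w => true :: bFun w
end

theorem aFun_involutive : Function.Involutive aFun := by
  intro w
  match w with
  | [] => rfl
  | x :: w => simp [aFun]

theorem bcd_involutive :
    ∀ w : List Bool, bFun (bFun w) = w ∧ cFun (cFun w) = w ∧ dFun (dFun w) = w := by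
  intro w
  induction w with
  | nil => exact ⟨rfl, rfl, rfl⟩
  | cons x w ih =>
    rcases x with _ | _
    · simp [bFun, cFun, dFun, aFun_involutive w]
    · simp [bFun, cFun, dFun, ih.1, ih.2.1, ih.2.2]

theorem bFun_involutive : Function.Involutive bFun := fun w => (bcd_involutive w).1
theorem cFun_involutive : Function.Involutive cFun := fun w => (bcd_involutive w).2.1
theorem dFun_involutive : Function.Involutive dFun := fun w => (bcd_involutive w).2.2

theorem aFun_length : ∀ w : List Bool, (aFun w).length = w.length := by
  intro w
  match w with
  | [] => rfl
  | x :: w => simp [aFun]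

theorem bcd_length : ∀ w : List Bool,
    (bFun w).length = w.length ∧ (cFun w).length = w.length ∧ (dFun w).length = w.length := by
  intro w
  induction w with
  | nil => exact ⟨rfl, rfl, rfl⟩
  | cons x w ih =>
    rcases x with _ | _
    · simp [bFun, cFun, dFun, aFun_length w]
    · simp [bFun, cFun, dFun, ih.1, ih.2.1, ih.2.2]

theorem bFun_length : ∀ w, (bFun w).length = w.length := fun w => (bcd_length w).1
theorem cFun_length : ∀ w, (cFun w).length = w.length := fun w => (bcd_length w).2.1
theorem dFun_length : ∀ w, (dFun w).length = w.length := fun w => (bcd_length w).2.2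

/-- The generators of the first Grigorchuk group as permutations of the vertex set
`{0,1}*` of the rooted binary tree. -/
def aPerm : Equiv.Perm (List Bool) := aFun_involutive.toPerm
def bPerm : Equiv.Perm (List Bool) := bFun_involutive.toPerm
def cPerm : Equiv.Perm (List Bool) := cFun_involutive.toPerm
def dPerm : Equiv.Perm (List Bool) := dFun_involutive.toPerm

/-- The generating set `S = {a, b, c, d}` (a set of involutions). -/
def Sset : Set (Equiv.Perm (List Bool)) := {aPerm, bPerm, cPerm, dPerm}

/-- The first Grigorchuk group. -/
def Grigorchuk : Subgroup (Equiv.Perm (List Bool)) := Subgroup.closure Sset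

/-- Word length with respect to `S = {a, b, c, d}`. -/
def wordLength (g : Equiv.Perm (List Bool)) : ℕ :=
  sInf {k | ∃ l : List (Equiv.Perm (List Bool)),
    (∀ x ∈ l, x ∈ Sset) ∧ l.length = k ∧ l.prod = g}

/-- The growth function of the first Grigorchuk group with respect to `S`. -/
def growthGrig (m : ℕ) : ℕ :=
  Nat.card {g : Equiv.Perm (List Bool) |
    ∃ l : List (Equiv.Perm (List Bool)), (∀ x ∈ l, x ∈ Sset) ∧ l.length ≤ m ∧ l.prod = g}

/-! ### Level transfer -/

def levelFun (n : ℕ) (f : List Bool → List Bool) (v : Fin n → Bool) : Fin n → Bool :=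
  fun i => (f (List.ofFn v)).getD i false

theorem levelFun_involutive (n : ℕ) (f : List Bool → List Bool)
    (hlen : ∀ l, (f l).length = l.length) (hinv : Function.Involutive f) :
    Function.Involutive (levelFun n f) := by
  intro v
  have key : ∀ u : Fin n → Bool, List.ofFn (levelFun n f u) = f (List.ofFn u) := by
    intro u
    apply List.ext_getElem
    · simp [hlen]
    · intro i h1 h2
      simp only [List.getElem_ofFn]
      simp [levelFun, List.getD_eq_getElem, h2]
  funext i
  simp only [levelFun, key v, hinv (List.ofFn v)]
  simp [List.getD_eq_getElem]

/-- The images `a_n, b_n, c_n, d_n` of the Grigorchuk generators in `Sym(X_n)`,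
where the `n`-th level `X_n = {0,1}^n` is identified with `Fin n → Bool`. -/
def aLev (n : ℕ) : Equiv.Perm (Fin n → Bool) :=
  (levelFun_involutive n aFun aFun_length aFun_involutive).toPerm
def bLev (n : ℕ) : Equiv.Perm (Fin n → Bool) :=
  (levelFun_involutive n bFun bFun_length bFun_involutive).toPerm
def cLev (n : ℕ) : Equiv.Perm (Fin n → Bool) :=
  (levelFun_involutive n cFun cFun_length cFun_involutive).toPerm
def dLev (n : ℕ) : Equiv.Perm (Fin n → Bool) :=
  (levelFun_involutive n dFun dFun_length dFun_involutive).toPerm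

end Grig

/-! ### The boundary action and actions of words -/

/-- The (continuous extension to the boundary `∂T = {0,1}^ℕ` of the) action of a tree
automorphism on the boundary of the rooted binary tree. -/
def boundaryAct (g : Equiv.Perm (List Bool)) (ξ : ℕ → Bool) : ℕ → Bool :=
  fun n => (g (List.ofFn fun i : Fin (n + 1) => ξ i)).getD n false

/-- Applying a word of generators to a vertex, letter by letter: the right action of the
word `l` (the generators in `S` are involutions). -/
def wordApply (l : List (Equiv.Perm (List Bool))) (v : List Bool) : List Bool :=
  l.foldl (fun v s => s v) v

/-- The right action of a word on a boundary point. -/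
def wordApplyB (l : List (Equiv.Perm (List Bool))) (ξ : ℕ → Bool) : ℕ → Bool :=
  l.foldl (fun ξ s => boundaryAct s ξ) ξ

/-- The boundary point `ρ = 1^∞`. -/
def rhoInf : ℕ → Bool := fun _ => true

/-- The vertex `ρ_n = 1^n` of the `n`-th level. -/
def rhoVertex (n : ℕ) : List Bool := List.replicate n true

/-- The vertex `η_n = 1^{n-1}0` of the `n`-th level. -/
def etaVertex (n : ℕ) : List Bool := List.replicate (n - 1) true ++ [false]
/-! ### Inverted orbits of the Grigorchuk group on the orbit of `ρ = 1^∞` -/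

/-- The inverted orbit `O_ξ(l) = {ξ, ξ·s_ℓ, ξ·s_{ℓ-1}s_ℓ, …, ξ·s_1⋯s_ℓ}` of the word
`l = s_1 ⋯ s_ℓ` at the boundary point `ξ`. -/
def invOrbitB (l : List (Equiv.Perm (List Bool))) (ξ : ℕ → Bool) : Set (ℕ → Bool) :=
  {x | ∃ i : ℕ, x = wordApplyB (l.drop i) ξ}

/-- The inverted orbit growth function `Δ_ρ^S` of the Grigorchuk group acting on the
orbit of `ρ = 1^∞`. -/
noncomputable def DeltaB (m : ℕ) : ℕ :=
  sSup {k | ∃ l : List (Equiv.Perm (List Bool)),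
    (∀ x ∈ l, x ∈ Grig.Sset) ∧ l.length ≤ m ∧ k = Nat.card (invOrbitB l rhoInf)}

/-- The number `N_ρ^S(m)` of distinct inverted orbits of words of length at most `m`. -/
noncomputable def NorbB (m : ℕ) : ℕ :=
  Nat.card {O : Set (ℕ → Bool) | ∃ l : List (Equiv.Perm (List Bool)),
    (∀ x ∈ l, x ∈ Grig.Sset) ∧ l.length ≤ m ∧ O = invOrbitB l rhoInf}
/-! ### Inverted orbits of `G_n = π_n(G)` acting on the level `X_n` -/

/-- The inverted orbit of the word `l` at a vertex `v`. -/
def invOrbitL (l : List (Equiv.Perm (List Bool))) (v : List Bool) : Set (List Bool) :=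
  {x | ∃ i : ℕ, x = wordApply (l.drop i) v}

/-- The inverted orbit growth function `Δ_v^{S_n}` of `G_n` acting on the level `X_n`. -/
noncomputable def DeltaL (v : List Bool) (m : ℕ) : ℕ :=
  sSup {k | ∃ l : List (Equiv.Perm (List Bool)),
    (∀ x ∈ l, x ∈ Grig.Sset) ∧ l.length ≤ m ∧ k = Nat.card (invOrbitL l v)}

/-- The number `N_v^{S_n}(m)` of distinct inverted orbits at `v` of words of length at
most `m`. -/
noncomputable def NorbL (v : List Bool) (m : ℕ) : ℕ :=
  Nat.card {O : Set (List Bool) | ∃ l : List (Equiv.Perm (List Bool)),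
    (∀ x ∈ l, x ∈ Grig.Sset) ∧ l.length ≤ m ∧ O = invOrbitL l v}

/-!
Every generator of `G` is a tree automorphism: it preserves lengths and commutes with taking
prefixes. Hence cutting boundary points down to their first `n` letters intertwines the action of
`G` on `∂T` with its action on `X_n`, and so does this truncation followed by flipping the last
letter, because a tree automorphism permutes the two children of each vertex. These two maps send
`ρ` to `ρ_n` and to `η_n`, and carry the inverted orbit of a word at `ρ` onto its inverted orbit at
`ρ_n`, respectively `η_n`. So for words of any length the inverted orbits at `ξ_n` are no larger and
no more numerous than those at `ρ`.
-/

namespace Grig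

structure IsTreeMap {α : Type*} (f : List α → List α) : Prop where
  length_eq : ∀ w, (f w).length = w.length
  take_eq : ∀ w m, (f w).take m = f (w.take m)

namespace IsTreeMap

variable {α : Type*} {f : List α → List α}

theorem map_nil (hf : IsTreeMap f) : f [] = [] :=
  List.eq_nil_of_length_eq_zero (hf.length_eq [])

theorem exists_map_concat (hf : IsTreeMap f) (u : List α) (x : α) :
    ∃ y, f (u ++ [x]) = f u ++ [y] := by
  obtain ⟨y, hy⟩ : ∃ y, (f (u ++ [x])).drop u.length = [y] :=
    List.length_eq_one_iff.mp (by simp [hf.length_eq])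
  refine ⟨y, ?_⟩
  rw [← List.take_append_drop u.length (f (u ++ [x])), hf.take_eq, hy]
  simp

theorem map_modifyLast_not {f : List Bool → List Bool} (hf : IsTreeMap f) (hinj : f.Injective)
    (w : List Bool) : f (w.modifyLast not) = (f w).modifyLast not := by
  induction w using List.reverseRecOn with
  | nil => rw [hf.map_nil]; exact hf.map_nil
  | append_singleton u x _ =>
    obtain ⟨y, hy⟩ := hf.exists_map_concat u x
    obtain ⟨y', hy'⟩ := hf.exists_map_concat u (!x)
    have hne : y' ≠ y := by
      rintro rfl
      simpa using hinj (hy'.trans hy.symm)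
    rw [List.modifyLast_concat, hy', hy, List.modifyLast_concat]
    cases y <;> cases y' <;> simp_all

end IsTreeMap

theorem isTreeMap_aFun : IsTreeMap aFun where
  length_eq := aFun_length
  take_eq w m := by cases w <;> cases m <;> simp [aFun]

theorem bcd_take (w : List Bool) (m : ℕ) :
    (bFun w).take m = bFun (w.take m) ∧ (cFun w).take m = cFun (w.take m) ∧
      (dFun w).take m = dFun (w.take m) := by
  induction w generalizing m with
  | nil => simp [bFun, cFun, dFun]
  | cons x w ih =>
    rcases m with _ | m
    · simp [bFun, cFun, dFun]
    · rcases x with _ | _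
      · simp [bFun, cFun, dFun, isTreeMap_aFun.take_eq]
      · simp [bFun, cFun, dFun, (ih m).1, (ih m).2.1, (ih m).2.2]

theorem isTreeMap_of_mem_Sset {s : Equiv.Perm (List Bool)} (hs : s ∈ Sset) : IsTreeMap s := by
  rcases hs with rfl | rfl | rfl | rfl | rfl
  · exact isTreeMap_aFun
  · exact ⟨bFun_length, fun w m => (bcd_take w m).1⟩
  · exact ⟨cFun_length, fun w m => (bcd_take w m).2.1⟩
  · exact ⟨dFun_length, fun w m => (bcd_take w m).2.2⟩

def truncate (n : ℕ) (ξ : ℕ → Bool) : List Bool := List.ofFn fun i : Fin n => ξ i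

theorem take_truncate {m n : ℕ} (hmn : m ≤ n) (ξ : ℕ → Bool) :
    (truncate n ξ).take m = truncate m ξ := by
  apply List.ext_getElem
  · simp [truncate]; omega
  · intro i _ _
    simp [truncate]

theorem truncate_boundaryAct {s : Equiv.Perm (List Bool)} (hs : IsTreeMap s) (n : ℕ)
    (ξ : ℕ → Bool) : truncate n (boundaryAct s ξ) = s (truncate n ξ) := by
  apply List.ext_getElem
  · simp [truncate, hs.length_eq]
  · intro i hi _
    have hin : i < n := by simpa [truncate] using hi
    have hprefix : (List.ofFn fun j : Fin (i + 1) => ξ j) = (truncate n ξ).take (i + 1) :=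
      (take_truncate (by omega) ξ).symm
    simp only [truncate, List.getElem_ofFn, boundaryAct]
    rw [hprefix, ← hs.take_eq, List.getD_eq_getElem _ _ (by simp [hs.length_eq, truncate]; omega),
      List.getElem_take]
    rfl

theorem truncate_rhoInf (n : ℕ) : truncate n rhoInf = rhoVertex n := by
  simp [truncate, rhoInf, rhoVertex, List.ofFn_const]

theorem modifyLast_not_rhoVertex {n : ℕ} (hn : n ≠ 0) :
    (rhoVertex n).modifyLast not = etaVertex n := by
  obtain ⟨m, rfl⟩ := Nat.exists_eq_succ_of_ne_zero hn
  simp [rhoVertex, etaVertex, List.replicate_succ', List.modifyLast_concat]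

theorem invOrbitB_eq_range (l : List (Equiv.Perm (List Bool))) (ξ : ℕ → Bool) :
    invOrbitB l ξ = Set.range fun i : Fin (l.length + 1) => wordApplyB (l.drop i) ξ := by
  ext x
  constructor
  · rintro ⟨i, rfl⟩
    refine ⟨⟨min i l.length, by omega⟩, ?_⟩
    rcases le_total i l.length with h | h
    · simp [h]
    · simp [h, List.drop_eq_nil_of_le h]
  · rintro ⟨i, rfl⟩
    exact ⟨i, rfl⟩

theorem finite_invOrbitB (l : List (Equiv.Perm (List Bool))) (ξ : ℕ → Bool) :
    (invOrbitB l ξ).Finite := by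
  rw [invOrbitB_eq_range]
  exact Set.finite_range _

theorem card_invOrbitB_le (l : List (Equiv.Perm (List Bool))) (ξ : ℕ → Bool) :
    Nat.card (invOrbitB l ξ) ≤ l.length + 1 := by
  rw [invOrbitB_eq_range]
  simpa using Finite.card_range_le fun i : Fin (l.length + 1) => wordApplyB (l.drop i) ξ

theorem finite_Sset : Sset.Finite := by
  unfold Sset
  exact Set.toFinite _

theorem finite_words {α : Type*} {S : Set α} (hS : S.Finite) (k : ℕ) :
    {l : List α | (∀ x ∈ l, x ∈ S) ∧ l.length ≤ k}.Finite := by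
  have := hS.to_subtype
  refine ((List.finite_length_le S k).image (List.map Subtype.val)).subset ?_
  rintro l ⟨hl, hlen⟩
  exact ⟨l.attach.map fun x => ⟨x.1, hl x.1 x.2⟩, by simpa using hlen, by simp⟩

def Intertwines (φ : (ℕ → Bool) → List Bool) : Prop :=
  ∀ s ∈ Sset, ∀ ξ, φ (boundaryAct s ξ) = s (φ ξ)

theorem intertwines_truncate (n : ℕ) : Intertwines (truncate n) := fun _ hs =>
  truncate_boundaryAct (isTreeMap_of_mem_Sset hs) n

theorem intertwines_modifyLast_not_truncate (n : ℕ) :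
    Intertwines (fun ξ => (truncate n ξ).modifyLast not) := fun s hs ξ => by
  dsimp only
  rw [intertwines_truncate n s hs, (isTreeMap_of_mem_Sset hs).map_modifyLast_not s.injective]

variable {φ : (ℕ → Bool) → List Bool} {l : List (Equiv.Perm (List Bool))}

theorem Intertwines.map_wordApplyB (hφ : Intertwines φ) (hl : ∀ s ∈ l, s ∈ Sset) (ξ : ℕ → Bool) :
    φ (wordApplyB l ξ) = wordApply l (φ ξ) := by
  induction l generalizing ξ with
  | nil => rfl
  | cons s l ih =>
    exact (ih (fun t ht => hl t (List.mem_cons_of_mem s ht)) _).trans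
      (congrArg (wordApply l) (hφ s (hl s List.mem_cons_self) ξ))

theorem Intertwines.image_invOrbitB (hφ : Intertwines φ) (hl : ∀ s ∈ l, s ∈ Sset)
    (ξ : ℕ → Bool) : φ '' invOrbitB l ξ = invOrbitL l (φ ξ) := by
  ext v
  simp only [invOrbitB, invOrbitL, Set.mem_image, Set.mem_ofPred_eq]
  constructor
  · rintro ⟨_, ⟨i, rfl⟩, rfl⟩
    exact ⟨i, hφ.map_wordApplyB (fun s hs => hl s (List.mem_of_mem_drop hs)) ξ⟩
  · rintro ⟨i, rfl⟩
    exact ⟨_, ⟨i, rfl⟩, hφ.map_wordApplyB (fun s hs => hl s (List.mem_of_mem_drop hs)) ξ⟩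

theorem Intertwines.DeltaL_le_DeltaB (hφ : Intertwines φ) (k : ℕ) :
    DeltaL (φ rhoInf) k ≤ DeltaB k := by
  have hbdd : BddAbove {m | ∃ l : List (Equiv.Perm (List Bool)),
      (∀ x ∈ l, x ∈ Sset) ∧ l.length ≤ k ∧ m = Nat.card (invOrbitB l rhoInf)} := by
    refine ⟨k + 1, ?_⟩
    rintro _ ⟨l, -, hlen, rfl⟩
    exact (card_invOrbitB_le l rhoInf).trans (by omega)
  refine csSup_le' ?_
  rintro _ ⟨l, hl, hlen, rfl⟩
  rw [← hφ.image_invOrbitB hl]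
  exact (Nat.card_image_le (finite_invOrbitB l rhoInf)).trans (le_csSup hbdd ⟨l, hl, hlen, rfl⟩)

theorem Intertwines.NorbL_le_NorbB (hφ : Intertwines φ) (k : ℕ) :
    NorbL (φ rhoInf) k ≤ NorbB k := by
  set orbitsB := {O : Set (ℕ → Bool) | ∃ l : List (Equiv.Perm (List Bool)),
    (∀ x ∈ l, x ∈ Sset) ∧ l.length ≤ k ∧ O = invOrbitB l rhoInf}
  have horbitsL : {O : Set (List Bool) | ∃ l : List (Equiv.Perm (List Bool)),
      (∀ x ∈ l, x ∈ Sset) ∧ l.length ≤ k ∧ O = invOrbitL l (φ rhoInf)} =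
      Set.image φ '' orbitsB := by
    ext O
    constructor
    · rintro ⟨l, hl, hlen, rfl⟩
      exact ⟨_, ⟨l, hl, hlen, rfl⟩, hφ.image_invOrbitB hl rhoInf⟩
    · rintro ⟨_, ⟨l, hl, hlen, rfl⟩, rfl⟩
      exact ⟨l, hl, hlen, hφ.image_invOrbitB hl rhoInf⟩
  have hfinite : orbitsB.Finite := by
    refine ((finite_words finite_Sset k).image fun l => invOrbitB l rhoInf).subset ?_
    rintro _ ⟨l, hl, hlen, rfl⟩
    exact ⟨l, ⟨hl, hlen⟩, rfl⟩
  rw [NorbL, horbitsL]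
  exact Nat.card_image_le hfinite

theorem exists_intertwines_rhoInf_eq {n : ℕ} (hn : n ≠ 0) {v : List Bool}
    (hv : v ∈ ({rhoVertex n, etaVertex n} : Set (List Bool))) :
    ∃ φ, Intertwines φ ∧ φ rhoInf = v := by
  rcases hv with rfl | rfl
  · exact ⟨truncate n, intertwines_truncate n, truncate_rhoInf n⟩
  · refine ⟨_, intertwines_modifyLast_not_truncate n, ?_⟩
    rw [truncate_rhoInf, modifyLast_not_rhoVertex hn]

end Grig

/-- **Transfer of the Bartholdi–Erschler bounds to the finite levels:** if `Δ_ρ^S(m) ≤ C m^α`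
and `N_ρ^S(m) ≤ exp(C m^α)` for all `m ≥ 1`, then for all sufficiently large `n`, for both
base points `ξ_n ∈ {ρ_n, η_n}` and every `k ≤ r_n = 2^⌊n/2⌋`, the inverted orbit growth
of the action of `G_n` on the level `X_n` with respect to `S_n` satisfies
`Δ_{ξ_n}^{S_n}(k) ≤ C k^α` and `N_{ξ_n}^{S_n}(k) ≤ exp(C k^α)`. -/
theorem bartholdi_erschler_finite_levels (C α : ℝ) (hC : 0 < C) (hα₀ : 0 < α) (hα₁ : α < 1)
    (hyp : ∀ m : ℕ, 1 ≤ m →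
      (DeltaB m : ℝ) ≤ C * (m : ℝ) ^ α ∧ (NorbB m : ℝ) ≤ Real.exp (C * (m : ℝ) ^ α)) :
    ∃ N : ℕ, ∀ n : ℕ, N ≤ n →
      ∀ v ∈ ({rhoVertex n, etaVertex n} : Set (List Bool)),
      ∀ k : ℕ, 1 ≤ k → k ≤ 2 ^ (n / 2) →
        (DeltaL v k : ℝ) ≤ C * (k : ℝ) ^ α ∧
        (NorbL v k : ℝ) ≤ Real.exp (C * (k : ℝ) ^ α) := by
  refine ⟨1, fun n hn v hv k hk _ => ?_⟩
  obtain ⟨φ, hφ, rfl⟩ := Grig.exists_intertwines_rhoInf_eq (by omega) hv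
  obtain ⟨hΔ, hN⟩ := hyp k hk
  exact ⟨(Nat.cast_le.mpr (hφ.DeltaL_le_DeltaB k)).trans hΔ,
    (Nat.cast_le.mpr (hφ.NorbL_le_NorbB k)).trans hN⟩
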